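/- arXiv:2009.08662 — 5 statements merged into one kernel-verified Lean document; each statement's English description precedes it below -/
import Mathlib

section
/- Let V : ℝⁿ × ℝⁿ → ℝ be twice continuously differentiable and suppose there are constants a₂ ≥ a₁ > 0 with a₁‖x − ξ‖² ≤ V(x, ξ) ≤ a₂‖x − ξ‖² for all x, ξ ∈ ℝⁿ. Then for every x ∈ ℝⁿ: (i) V(x, x) = 0; (ii) the first partial derivatives vanish on the diagonal, D₁V(x,x) = 0 and D₂V(x,x) = 0; (iii) the matrix M(x) := D²₂₂V(x,x) (the second derivative of ξ ↦ V(x,ξ) at ξ = x) satisfies 2a₁‖v‖² ≤ vᵀ M(x) v ≤ 2a₂‖v‖² for all v ∈ ℝⁿ; and (iv) the mixed second partial derivative satisfies D²₁₂V(x,x) = −M(x), i.e. for all v, w ∈ ℝⁿ, D²₁₂V(x,x)[w, v] = −wᵀ M(x) v. -/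
/-!
Squeezing `V` between two nonnegative quadratic forms that vanish on the diagonal forces
`V(x, x) = 0` and makes the diagonal a minimum in each variable, so both first partial derivatives
vanish there. Along a line `ξ = x + t v`, the second-order Taylor expansion of `V(x, ·)` with
Peano remainder turns the quadratic bounds on `V` into the bounds on `M(x)`. Finally,
differentiating the identity `D₂V(y, y) = 0` along the diagonal gives `D²₁₂V(x, x) + M(x) = 0`.
-/

open Matrix

/-- Second derivative of `ξ ↦ V x ξ` evaluated at `ξ = x`, as a matrix. -/
noncomputable def hess2 {n : ℕ} (V : (Fin n → ℝ) → (Fin n → ℝ) → ℝ) (x : Fin n → ℝ) :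
    Matrix (Fin n) (Fin n) ℝ :=
  Matrix.of fun i j => fderiv ℝ (fun ξ => fderiv ℝ (V x) ξ (Pi.single j 1)) x (Pi.single i 1)

open Set Topology

section SecondOrder

variable {E : Type*} [NormedAddCommGroup E] [NormedSpace ℝ E] {f : E → ℝ} {f' : E → E →L[ℝ] ℝ}
  {f'' : E →L[ℝ] E →L[ℝ] ℝ} {x w : E} {c : ℝ}

theorem two_mul_le_second_deriv_of_mul_sq_le (hf : ∀ y, HasFDerivAt f (f' y) y)
    (hf' : HasFDerivAt f' f'' x) (hcrit : f' x = 0)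
    (hle : ∀ᶠ t in 𝓝[>] 0, c * t ^ 2 ≤ f (x + t • w) - f x) :
    2 * c ≤ f'' w w := by
  -- With `v = 0` this is the Peano form of Taylor's formula at `x` in the direction `w`.
  have htaylor := convex_univ.taylor_approx_two_segment (fun y _ => hf y) (mem_univ x)
    (by rw [interior_univ]; exact hf'.hasFDerivWithinAt) (v := 0) (w := w) (by simp) (by simp)
  simp only [smul_zero, add_zero, hcrit, _root_.zero_apply, map_zero, smul_eq_mul, mul_zero,
    sub_zero] at htaylor
  by_contra! hlt
  obtain ⟨t, hsmall, hbig, ht⟩ :=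
    ((htaylor.def (c := (c - f'' w w / 2) / 2) (by linarith)).and
      (hle.and self_mem_nhdsWithin)).exists
  rw [Real.norm_eq_abs, Real.norm_eq_abs, abs_of_nonneg (sq_nonneg t)] at hsmall
  have ht2 : 0 < t ^ 2 := pow_pos ht 2
  nlinarith [le_abs_self (f (x + t • w) - f x - t ^ 2 / 2 * f'' w w),
    mul_pos (sub_pos.2 hlt) ht2]

theorem second_deriv_le_two_mul_of_sub_le_mul_sq (hf : ∀ y, HasFDerivAt f (f' y) y)
    (hf' : HasFDerivAt f' f'' x) (hcrit : f' x = 0)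
    (hle : ∀ᶠ t in 𝓝[>] 0, f (x + t • w) - f x ≤ c * t ^ 2) :
    f'' w w ≤ 2 * c := by
  have := two_mul_le_second_deriv_of_mul_sq_le (f := -f) (c := -c) (fun y => (hf y).neg) hf'.neg
    (by simp [hcrit]) (hle.mono fun t ht => by simp only [Pi.neg_apply]; linarith)
  simp only [_root_.neg_apply] at this
  linarith

end SecondOrder

theorem fderiv_left_eq_neg_fderiv_right_of_diag_eq_zero {𝕜 E F : Type*} [NontriviallyNormedField 𝕜]
    [NormedAddCommGroup E] [NormedSpace 𝕜 E] [NormedAddCommGroup F] [NormedSpace 𝕜 F]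
    {G : E × E → F} {x : E} (hG : DifferentiableAt 𝕜 G (x, x)) (hdiag : ∀ y, G (y, y) = 0) :
    fderiv 𝕜 (fun y => G (y, x)) x = -fderiv 𝕜 (fun y => G (x, y)) x := by
  have hleft : HasFDerivAt (fun y => G (y, x)) ((fderiv 𝕜 G (x, x)).comp (.inl 𝕜 E E)) x :=
    HasFDerivAt.comp (f := fun y : E => (y, x)) x hG.hasFDerivAt (hasFDerivAt_prodMk_left x x)
  have hright : HasFDerivAt (fun y => G (x, y)) ((fderiv 𝕜 G (x, x)).comp (.inr 𝕜 E E)) x :=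
    hG.hasFDerivAt.comp x (hasFDerivAt_prodMk_right x x)
  have hdiagonal := hG.hasFDerivAt.comp (f := fun y => (y, y)) x
    ((hasFDerivAt_id x).prodMk (hasFDerivAt_id x))
  have hzero : HasFDerivAt (fun y => G (y, y)) (0 : E →L[𝕜] F) x := by
    simpa only [hdiag] using hasFDerivAt_const (0 : F) x
  rw [hleft.fderiv, hright.fderiv, eq_neg_iff_add_eq_zero]
  ext w
  have := congrArg (· w) (hdiagonal.unique hzero)
  simpa [← map_add] using this

theorem fderiv_eq_fderiv_uncurry_comp_inr {𝕜 E E' F : Type*} [NontriviallyNormedField 𝕜]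
    [NormedAddCommGroup E] [NormedSpace 𝕜 E] [NormedAddCommGroup E'] [NormedSpace 𝕜 E']
    [NormedAddCommGroup F] [NormedSpace 𝕜 F] {V : E → E' → F} {y : E} {ξ : E'}
    (hV : DifferentiableAt 𝕜 (fun p : E × E' => V p.1 p.2) (y, ξ)) :
    fderiv 𝕜 (V y) ξ = (fderiv 𝕜 (fun p : E × E' => V p.1 p.2) (y, ξ)).comp
      (ContinuousLinearMap.inr 𝕜 E E') :=
  (hV.hasFDerivAt.comp ξ (hasFDerivAt_prodMk_right y ξ)).fderiv

theorem dotProduct_hess2_mulVec {n : ℕ} {V : (Fin n → ℝ) → (Fin n → ℝ) → ℝ} {x : Fin n → ℝ}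
    (h : DifferentiableAt ℝ (fderiv ℝ (V x)) x) (v w : Fin n → ℝ) :
    w ⬝ᵥ (hess2 V x *ᵥ v) = fderiv ℝ (fderiv ℝ (V x)) x w v := by
  have hmatrix : hess2 V x = LinearMap.toMatrix₂' ℝ
      (ContinuousLinearMap.toLinearMap₁₂ (fderiv ℝ (fderiv ℝ (V x)) x)) := by
    ext i j
    simp [hess2, fderiv_clm_apply h (differentiableAt_const _)]
  rw [hmatrix, ← Matrix.toLinearMap₂'_apply', Matrix.toLinearMap₂'_toMatrix']
  rfl

theorem mixed_fderiv_eq_neg_fderiv_fderiv {𝕜 E F : Type*} [NontriviallyNormedField 𝕜]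
    [NormedAddCommGroup E] [NormedSpace 𝕜 E] [NormedAddCommGroup F] [NormedSpace 𝕜 F]
    {V : E → E → F} (hV : ContDiff 𝕜 2 (fun p : E × E => V p.1 p.2))
    (hcrit : ∀ y, fderiv 𝕜 (V y) y = 0) (x v w : E) :
    fderiv 𝕜 (fun y => fderiv 𝕜 (V y) x v) x w = -fderiv 𝕜 (fderiv 𝕜 (V x)) x w v := by
  have hDV : Differentiable 𝕜 (fderiv 𝕜 fun p : E × E => V p.1 p.2) :=
    (hV.fderiv_right (m := 1) (by norm_num)).differentiable one_ne_zero
  have hVx : ContDiff 𝕜 2 (V x) := hV.comp (contDiff_const.prodMk contDiff_id)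
  have hDVx : Differentiable 𝕜 (fderiv 𝕜 (V x)) :=
    (hVx.fderiv_right (m := 1) (by norm_num)).differentiable one_ne_zero
  have hpartial : (fun p : E × E => fderiv 𝕜 (V p.1) p.2 v) =
      fun p => fderiv 𝕜 (fun p : E × E => V p.1 p.2) p (0, v) :=
    funext fun p => by
      rw [fderiv_eq_fderiv_uncurry_comp_inr (hV.differentiable two_ne_zero p)]
      rfl
  have hG : DifferentiableAt 𝕜 (fun p : E × E => fderiv 𝕜 (V p.1) p.2 v) (x, x) :=
    hpartial ▸ (hDV _).clm_apply (differentiableAt_const _)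
  rw [fderiv_left_eq_neg_fderiv_right_of_diag_eq_zero hG fun y => by simp [hcrit y],
    _root_.neg_apply, fderiv_clm_apply (hDVx x) (differentiableAt_const v)]
  simp

theorem stmt2_general {n : ℕ}
    (V : (Fin n → ℝ) → (Fin n → ℝ) → ℝ)
    (hV : ContDiff ℝ 2 (fun p : (Fin n → ℝ) × (Fin n → ℝ) => V p.1 p.2))
    (a₁ a₂ : ℝ) (ha₁ : 0 < a₁)
    (hVlow : ∀ x ξ, a₁ * ((x - ξ) ⬝ᵥ (x - ξ)) ≤ V x ξ)
    (hVup : ∀ x ξ, V x ξ ≤ a₂ * ((x - ξ) ⬝ᵥ (x - ξ))) :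
    ∀ x : Fin n → ℝ,
      -- (i)
      V x x = 0 ∧
      -- (ii)
      fderiv ℝ (fun y => V y x) x = 0 ∧ fderiv ℝ (V x) x = 0 ∧
      -- (iii)
      (∀ v : Fin n → ℝ, 2 * a₁ * (v ⬝ᵥ v) ≤ v ⬝ᵥ (hess2 V x *ᵥ v) ∧
          v ⬝ᵥ (hess2 V x *ᵥ v) ≤ 2 * a₂ * (v ⬝ᵥ v)) ∧
      -- (iv) mixed second derivative D²₁₂V(x,x)[w,v] = −wᵀ M(x) v
      (∀ v w : Fin n → ℝ,
        fderiv ℝ (fun y => fderiv ℝ (V y) x v) x w = -(w ⬝ᵥ (hess2 V x *ᵥ v))) := by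
  intro x
  have hnonneg (y ξ : Fin n → ℝ) : 0 ≤ V y ξ :=
    (mul_nonneg ha₁.le (dotProduct_self_star_nonneg _)).trans (hVlow y ξ)
  have hdiag (y : Fin n → ℝ) : V y y = 0 :=
    le_antisymm (by simpa using hVup y y) (hnonneg y y)
  have hD₁ (y : Fin n → ℝ) : fderiv ℝ (fun z => V z y) y = 0 :=
    IsLocalMin.fderiv_eq_zero (.of_forall fun z => (hdiag y).trans_le (hnonneg z y))
  have hD₂ (y : Fin n → ℝ) : fderiv ℝ (V y) y = 0 :=
    IsLocalMin.fderiv_eq_zero (.of_forall fun ξ => (hdiag y).trans_le (hnonneg y ξ))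
  have hVx : ContDiff ℝ 2 (V x) := hV.comp (contDiff_const.prodMk contDiff_id)
  have hDVx : HasFDerivAt (fderiv ℝ (V x)) (fderiv ℝ (fderiv ℝ (V x)) x) x :=
    ((hVx.fderiv_right (m := 1) (by norm_num)).differentiable one_ne_zero x).hasFDerivAt
  have hM := dotProduct_hess2_mulVec hDVx.differentiableAt
  have hsq (v : Fin n → ℝ) (t : ℝ) : (x - (x + t • v)) ⬝ᵥ (x - (x + t • v)) = v ⬝ᵥ v * t ^ 2 := by
    simp only [sub_add_cancel_left, neg_dotProduct, dotProduct_neg, smul_dotProduct,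
      dotProduct_smul, smul_eq_mul]
    ring
  have hf (y : Fin n → ℝ) := (hVx.differentiable two_ne_zero y).hasFDerivAt
  refine ⟨hdiag x, hD₁ x, hD₂ x, fun v => ⟨?_, ?_⟩, fun v w => ?_⟩
  · rw [hM, mul_assoc]
    refine two_mul_le_second_deriv_of_mul_sq_le hf hDVx (hD₂ x) (.of_forall fun t => ?_)
    simpa only [hdiag x, sub_zero, hsq, mul_assoc] using hVlow x (x + t • v)
  · rw [hM, mul_assoc]
    refine second_deriv_le_two_mul_of_sub_le_mul_sq hf hDVx (hD₂ x) (.of_forall fun t => ?_)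
    simpa only [hdiag x, sub_zero, hsq, mul_assoc] using hVup x (x + t • v)
  · rw [hM, mixed_fderiv_eq_neg_fderiv_fderiv hV hD₂]

theorem stmt2 {n : ℕ}
    (V : (Fin n → ℝ) → (Fin n → ℝ) → ℝ)
    (hV : ContDiff ℝ 2 (fun p : (Fin n → ℝ) × (Fin n → ℝ) => V p.1 p.2))
    (a₁ a₂ : ℝ) (ha₁ : 0 < a₁) (ha₁₂ : a₁ ≤ a₂)
    (hVlow : ∀ x ξ, a₁ * ((x - ξ) ⬝ᵥ (x - ξ)) ≤ V x ξ)
    (hVup : ∀ x ξ, V x ξ ≤ a₂ * ((x - ξ) ⬝ᵥ (x - ξ))) :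
    ∀ x : Fin n → ℝ,
      -- (i)
      V x x = 0 ∧
      -- (ii)
      fderiv ℝ (fun y => V y x) x = 0 ∧ fderiv ℝ (V x) x = 0 ∧
      -- (iii)
      (∀ v : Fin n → ℝ, 2 * a₁ * (v ⬝ᵥ v) ≤ v ⬝ᵥ (hess2 V x *ᵥ v) ∧
          v ⬝ᵥ (hess2 V x *ᵥ v) ≤ 2 * a₂ * (v ⬝ᵥ v)) ∧
      -- (iv) mixed second derivative D²₁₂V(x,x)[w,v] = −wᵀ M(x) v
      (∀ v w : Fin n → ℝ,
        fderiv ℝ (fun y => fderiv ℝ (V y) x v) x w = -(w ⬝ᵥ (hess2 V x *ᵥ v))) :=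
  stmt2_general V hV a₁ a₂ ha₁ hVlow hVup
end

section
/- Let f : ℝⁿ → ℝⁿ be continuously differentiable, B : ℝⁿ → ℝ^{n×m} continuous, and let M : ℝⁿ → ℝ^{n×n} be a continuously differentiable symmetric-matrix-valued map with 2a₁ I ⪯ M(x) ⪯ 2a₂ I for all x and constants a₂ ≥ a₁ > 0, satisfying condition (C1_λ) for some λ > 0. Let x : [0,∞) → ℝⁿ be differentiable with x′(t) = f(x(t)) for all t ≥ 0, and let δ : [0,∞) → ℝⁿ be differentiable with δ′(t) = Df(x(t)) δ(t) and B(x(t))ᵀ M(x(t)) δ(t) = 0 for all t ≥ 0. Then δ(t)ᵀ M(x(t)) δ(t) ≤ e^{−λ t} · δ(0)ᵀ M(x(0)) δ(0) for all t ≥ 0, and consequently ‖δ(t)‖ ≤ √(a₂/a₁) · e^{−λ t / 2} · ‖δ(0)‖. -/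
/-! Along the flow, the derivative of `V t = δᵀ M(x) δ` is
`δᵀ (∂_f M + Dfᵀ M + M Df) δ`, which condition (C1_λ) bounds by `-λ V`, since `δ` stays in
the kernel of the output map. Hence `exp (λ t) V t` is antitone, which gives the decay of `V`;
the bounds `2 a₁ I ⪯ M ⪯ 2 a₂ I` convert it into the decay of `‖δ‖`. -/

open Matrix

attribute [local instance] Matrix.normedAddCommGroup Matrix.normedSpace

noncomputable def jacM {ι κ : Type*} [Fintype ι] [DecidableEq ι] [Fintype κ]
    (f : (ι → ℝ) → (κ → ℝ)) (x : ι → ℝ) : Matrix κ ι ℝ :=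
  Matrix.of fun k j => fderiv ℝ f x (Pi.single j 1) k

theorem HasDerivAt.dotProduct_mulVec {𝕜 ι κ : Type*} [NontriviallyNormedField 𝕜]
    [Fintype ι] [Fintype κ] {u : 𝕜 → ι → 𝕜} {A : 𝕜 → Matrix ι κ 𝕜} {w : 𝕜 → κ → 𝕜}
    {u' : ι → 𝕜} {A' : Matrix ι κ 𝕜} {w' : κ → 𝕜} {t : 𝕜}
    (hu : HasDerivAt u u' t) (hA : HasDerivAt A A' t) (hw : HasDerivAt w w' t) :
    HasDerivAt (fun s => u s ⬝ᵥ (A s *ᵥ w s))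
      (u' ⬝ᵥ (A t *ᵥ w t) + u t ⬝ᵥ (A' *ᵥ w t) + u t ⬝ᵥ (A t *ᵥ w')) t := by
  have hsum : HasDerivAt (fun s => ∑ i, ∑ j, u s i * (A s i j * w s j))
      (∑ i, ∑ j, (u' i * (A t i j * w t j)
        + u t i * (A' i j * w t j + A t i j * w' j))) t := by
    refine HasDerivAt.fun_sum fun i _ => HasDerivAt.fun_sum fun j _ => ?_
    exact (hasDerivAt_pi.mp hu i).mul
      ((hasDerivAt_pi.mp (hasDerivAt_pi.mp hA i) j).mul (hasDerivAt_pi.mp hw j))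
  convert hsum using 1
  · funext s
    simp only [dotProduct, mulVec, Finset.mul_sum]
  · simp only [dotProduct, mulVec, Finset.mul_sum, mul_add, Finset.sum_add_distrib]
    ring

theorem dotProduct_add_transpose_mul_add_mul_mulVec {R ι : Type*} [CommRing R] [Fintype ι]
    (A A' J : Matrix ι ι R) (v : ι → R) :
    v ⬝ᵥ ((A' + Jᵀ * A + A * J) *ᵥ v)
      = (J *ᵥ v) ⬝ᵥ (A *ᵥ v) + v ⬝ᵥ (A' *ᵥ v) + v ⬝ᵥ (A *ᵥ (J *ᵥ v)) := by
  rw [add_mulVec, add_mulVec, ← mulVec_mulVec, ← mulVec_mulVec, dotProduct_add,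
    dotProduct_add, dotProduct_mulVec v Jᵀ, vecMul_transpose]
  ring

theorem HasDerivAt.dotProduct_mulVec_of_linear {𝕜 ι : Type*} [NontriviallyNormedField 𝕜]
    [Fintype ι] {u : 𝕜 → ι → 𝕜} {A : 𝕜 → Matrix ι ι 𝕜} {J A' : Matrix ι ι 𝕜} {t : 𝕜}
    (hu : HasDerivAt u (J *ᵥ u t) t) (hA : HasDerivAt A A' t) :
    HasDerivAt (fun s => u s ⬝ᵥ (A s *ᵥ u s))
      (u t ⬝ᵥ ((A' + Jᵀ * A t + A t * J) *ᵥ u t)) t := by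
  rw [dotProduct_add_transpose_mul_add_mul_mulVec]
  exact hu.dotProduct_mulVec hA hu

theorem le_exp_neg_mul_mul_of_hasDerivAt_le {V V' : ℝ → ℝ} {lam : ℝ}
    (hV : ∀ t, 0 ≤ t → HasDerivAt V (V' t) t) (hle : ∀ t, 0 ≤ t → V' t ≤ -lam * V t)
    {t : ℝ} (ht : 0 ≤ t) : V t ≤ Real.exp (-lam * t) * V 0 := by
  have hg : ∀ s, 0 ≤ s → HasDerivAt (fun s => Real.exp (lam * s) * V s)
      (lam * Real.exp (lam * s) * V s + Real.exp (lam * s) * V' s) s := fun s hs =>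
    (((hasDerivAt_const_mul lam).exp).fun_mul (hV s hs)).congr_deriv (by ring)
  have hanti : AntitoneOn (fun s => Real.exp (lam * s) * V s) (Set.Ici 0) := by
    refine antitoneOn_of_hasDerivWithinAt_nonpos (convex_Ici 0)
      (fun s hs => (hg s hs).continuousAt.continuousWithinAt)
      (fun s hs => (hg s (interior_subset hs)).hasDerivWithinAt) fun s hs => ?_
    have := mul_le_mul_of_nonneg_left (hle s (interior_subset hs)) (Real.exp_pos (lam * s)).le
    linarith
  have hgt : Real.exp (lam * t) * V t ≤ V 0 := by
    simpa using hanti Set.self_mem_Ici ht ht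
  rw [neg_mul, Real.exp_neg, inv_mul_eq_div, le_div_iff₀' (Real.exp_pos _)]
  exact hgt

theorem sqrt_le_sqrt_div_mul_exp_mul_sqrt {a₁ a₂ p q c : ℝ} (ha₁ : 0 < a₁) (hq : 0 ≤ q)
    (h : 2 * a₁ * p ≤ Real.exp c * (2 * a₂ * q)) :
    √p ≤ √(a₂ / a₁) * Real.exp (c / 2) * √q := by
  have hp : p ≤ a₂ / a₁ * Real.exp c * q := by
    rw [div_mul_eq_mul_div, div_mul_eq_mul_div, le_div_iff₀ ha₁]
    linarith
  calc √p ≤ √(a₂ / a₁ * Real.exp c * q) := Real.sqrt_le_sqrt hp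
    _ = √(a₂ / a₁) * Real.exp (c / 2) * √q := by
      rw [Real.sqrt_mul' _ hq, Real.sqrt_mul' _ (Real.exp_pos c).le, Real.exp_half]

theorem stmt4_general {n m : ℕ}
    (f : (Fin n → ℝ) → (Fin n → ℝ))
    (B : (Fin n → ℝ) → Matrix (Fin n) (Fin m) ℝ)
    (M : (Fin n → ℝ) → Matrix (Fin n) (Fin n) ℝ) (hM : ContDiff ℝ 1 M)
    (a₁ a₂ : ℝ) (ha₁ : 0 < a₁)
    (hbound : ∀ (x v : Fin n → ℝ), 2 * a₁ * (v ⬝ᵥ v) ≤ v ⬝ᵥ (M x *ᵥ v) ∧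
        v ⬝ᵥ (M x *ᵥ v) ≤ 2 * a₂ * (v ⬝ᵥ v))
    (lam : ℝ)
    -- condition (C1_λ)
    (hC1 : ∀ (x v : Fin n → ℝ), v ≠ 0 → (B x)ᵀ *ᵥ (M x *ᵥ v) = 0 →
      v ⬝ᵥ ((fderiv ℝ M x (f x) + (jacM f x)ᵀ * M x + M x * jacM f x) *ᵥ v)
        ≤ -lam * (v ⬝ᵥ (M x *ᵥ v)))
    (x δ : ℝ → (Fin n → ℝ))
    (hx : ∀ t, 0 ≤ t → HasDerivAt x (f (x t)) t)
    (hδ : ∀ t, 0 ≤ t → HasDerivAt δ (jacM f (x t) *ᵥ δ t) t)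
    (hout : ∀ t, 0 ≤ t → (B (x t))ᵀ *ᵥ (M (x t) *ᵥ δ t) = 0) :
    ∀ t, 0 ≤ t →
      δ t ⬝ᵥ (M (x t) *ᵥ δ t) ≤ Real.exp (-lam * t) * (δ 0 ⬝ᵥ (M (x 0) *ᵥ δ 0)) ∧
      Real.sqrt (δ t ⬝ᵥ δ t)
        ≤ Real.sqrt (a₂ / a₁) * Real.exp (-(lam * t) / 2) * Real.sqrt (δ 0 ⬝ᵥ δ 0) := by
  have hderiv : ∀ t, 0 ≤ t → HasDerivAt (fun s => δ s ⬝ᵥ (M (x s) *ᵥ δ s))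
      (δ t ⬝ᵥ ((fderiv ℝ M (x t) (f (x t)) + (jacM f (x t))ᵀ * M (x t)
        + M (x t) * jacM f (x t)) *ᵥ δ t)) t := fun t ht =>
    (hδ t ht).dotProduct_mulVec_of_linear
      ((hM.differentiable one_ne_zero (x t)).hasFDerivAt.comp_hasDerivAt t (hx t ht))
  have hdecay : ∀ t, 0 ≤ t →
      δ t ⬝ᵥ ((fderiv ℝ M (x t) (f (x t)) + (jacM f (x t))ᵀ * M (x t)
        + M (x t) * jacM f (x t)) *ᵥ δ t) ≤ -lam * (δ t ⬝ᵥ (M (x t) *ᵥ δ t)) := by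
    intro t ht
    by_cases hzero : δ t = 0
    · simp [hzero]
    · exact hC1 (x t) (δ t) hzero (hout t ht)
  intro t ht
  have hV := le_exp_neg_mul_mul_of_hasDerivAt_le hderiv hdecay ht
  refine ⟨hV, sqrt_le_sqrt_div_mul_exp_mul_sqrt ha₁ (dotProduct_self_star_nonneg (δ 0)) ?_⟩
  calc 2 * a₁ * (δ t ⬝ᵥ δ t) ≤ δ t ⬝ᵥ (M (x t) *ᵥ δ t) := (hbound (x t) (δ t)).1
    _ ≤ Real.exp (-lam * t) * (δ 0 ⬝ᵥ (M (x 0) *ᵥ δ 0)) := hV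
    _ ≤ Real.exp (-(lam * t)) * (2 * a₂ * (δ 0 ⬝ᵥ δ 0)) := by
      rw [← neg_mul]
      exact mul_le_mul_of_nonneg_left (hbound (x 0) (δ 0)).2 (Real.exp_pos _).le

theorem stmt4 {n m : ℕ}
    (f : (Fin n → ℝ) → (Fin n → ℝ)) (hf : ContDiff ℝ 1 f)
    (B : (Fin n → ℝ) → Matrix (Fin n) (Fin m) ℝ) (hB : Continuous B)
    (M : (Fin n → ℝ) → Matrix (Fin n) (Fin n) ℝ) (hM : ContDiff ℝ 1 M)
    (hMsymm : ∀ x, (M x).IsSymm)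
    (a₁ a₂ : ℝ) (ha₁ : 0 < a₁) (ha₁₂ : a₁ ≤ a₂)
    (hbound : ∀ (x v : Fin n → ℝ), 2 * a₁ * (v ⬝ᵥ v) ≤ v ⬝ᵥ (M x *ᵥ v) ∧
        v ⬝ᵥ (M x *ᵥ v) ≤ 2 * a₂ * (v ⬝ᵥ v))
    (lam : ℝ) (hlam : 0 < lam)
    -- condition (C1_λ)
    (hC1 : ∀ (x v : Fin n → ℝ), v ≠ 0 → (B x)ᵀ *ᵥ (M x *ᵥ v) = 0 →
      v ⬝ᵥ ((fderiv ℝ M x (f x) + (jacM f x)ᵀ * M x + M x * jacM f x) *ᵥ v)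
        ≤ -lam * (v ⬝ᵥ (M x *ᵥ v)))
    (x δ : ℝ → (Fin n → ℝ))
    (hx : ∀ t, 0 ≤ t → HasDerivAt x (f (x t)) t)
    (hδ : ∀ t, 0 ≤ t → HasDerivAt δ (jacM f (x t) *ᵥ δ t) t)
    (hout : ∀ t, 0 ≤ t → (B (x t))ᵀ *ᵥ (M (x t) *ᵥ δ t) = 0) :
    ∀ t, 0 ≤ t →
      δ t ⬝ᵥ (M (x t) *ᵥ δ t) ≤ Real.exp (-lam * t) * (δ 0 ⬝ᵥ (M (x 0) *ᵥ δ 0)) ∧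
      Real.sqrt (δ t ⬝ᵥ δ t)
        ≤ Real.sqrt (a₂ / a₁) * Real.exp (-(lam * t) / 2) * Real.sqrt (δ 0 ⬝ᵥ δ 0) :=
  stmt4_general f B M hM a₁ a₂ ha₁ hbound lam hC1 x δ hx hδ hout
end

section
/- Let f : ℝⁿ → ℝⁿ be differentiable, let M : ℝⁿ → ℝ^{n×n} be a differentiable symmetric-matrix-valued map with M(x) positive definite for every x, and set W(x) := M(x)⁻¹. Let B : ℝⁿ → ℝ^{n×m} (m < n) have full column rank, and let B_⊥ : ℝⁿ → ℝ^{n×(n−m)} have full column rank with B(x)ᵀ B_⊥(x) = 0 for all x. Fix x ∈ ℝⁿ. Then: (i) ∂_g W(x) = −W(x) (∂_g M(x)) W(x) for any direction map g; (ii) the implication [for every nonzero v ∈ ℝⁿ with B(x)ᵀ M(x) v = 0, vᵀ(∂_f M(x) + Df(x)ᵀ M(x) + M(x) Df(x)) v < 0] holds if and only if the (n−m)×(n−m) matrix B_⊥(x)ᵀ(−∂_f W(x) + Df(x) W(x) + W(x) Df(x)ᵀ) B_⊥(x) is negative definite; (iii) for each i = 1,…,m, ∂_{B_i} M(x) + DB_i(x)ᵀ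 M(x) + M(x) DB_i(x) = 0 if and only if ∂_{B_i} W(x) − DB_i(x) W(x) − W(x) DB_i(x)ᵀ = 0. -/
/-! Part (i) is the derivative of inversion in a normed algebra. Given (i),
`W (∂_g M + Dgᵀ M + M Dg) W = -∂_g W + Dg W + W Dgᵀ`, so both dual statements are
conjugations by the invertible matrix `W`. For (iii), conjugation preserves vanishing. For (ii),
`v = W B_⊥ w` is a bijection between nonzero `w` and nonzero `v` with `Bᵀ M v = 0`, since by a
dimension count the injective `B_⊥` maps onto the kernel of `Bᵀ`. -/

open Matrix

attribute [local instance] Matrix.normedAddCommGroup Matrix.normedSpace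

theorem fderiv_matrix_inv_apply {𝕜 E ι : Type*}
    [NontriviallyNormedField 𝕜] [CompleteSpace 𝕜] [NormedAddCommGroup E] [NormedSpace 𝕜 E]
    [Fintype ι] [DecidableEq ι]
    {M : E → Matrix ι ι 𝕜} {x : E} (hM : DifferentiableAt 𝕜 M x) (hx : IsUnit (M x).det)
    (d : E) :
    fderiv 𝕜 (fun y => (M y)⁻¹) x d = -((M x)⁻¹ * fderiv 𝕜 M x d * (M x)⁻¹) := by
  rw [show (fun y => (M y)⁻¹) = Ring.inverse ∘ M from
    funext fun y => nonsing_inv_eq_ringInverse _]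
  -- The sup norm is not submultiplicative; the operator norm is, and it induces the same
  -- topology, so `fderiv` is unchanged.
  let R : NormedRing (Matrix ι ι 𝕜) := Matrix.linftyOpNormedRing
  let _ : NormedAlgebra 𝕜 (Matrix ι ι 𝕜) := Matrix.linftyOpNormedAlgebra
  have _ : @CompleteSpace (Matrix ι ι 𝕜) R.toUniformSpace := by
    let _ : NormedAddCommGroup (Matrix ι ι 𝕜) := Matrix.linftyOpNormedAddCommGroup
    let _ : NormedSpace 𝕜 (Matrix ι ι 𝕜) := Matrix.linftyOpNormedSpace
    exact FiniteDimensional.complete 𝕜 _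
  obtain ⟨u, hu⟩ := (isUnit_iff_isUnit_det _).2 hx
  have hinv := hasFDerivAt_ringInverse (𝕜 := 𝕜) u
  rw [Matrix.coe_units_inv, hu] at hinv
  exact congrArg (fun L => L d) (hinv.comp x hM.hasFDerivAt).fderiv

namespace Matrix

variable {K ι κ μ : Type*} [Fintype ι] [Fintype κ] [Fintype μ]

theorem inv_mul_add_transpose_mul_add_mul_mul_inv [DecidableEq ι] [CommRing K]
    {M : Matrix ι ι K} (hM : IsUnit M.det) (P A : Matrix ι ι K) :
    M⁻¹ * (P + Aᵀ * M + M * A) * M⁻¹ = M⁻¹ * P * M⁻¹ + A * M⁻¹ + M⁻¹ * Aᵀ := by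
  simp only [Matrix.mul_add, Matrix.add_mul, Matrix.mul_assoc, mul_nonsing_inv _ hM,
    Matrix.mul_one]
  simp only [← Matrix.mul_assoc, nonsing_inv_mul _ hM, Matrix.one_mul]
  abel

theorem range_mulVecLin_eq_ker_transpose [Field K] {B : Matrix ι κ K} {C : Matrix ι μ K}
    (hB : Function.Injective B.mulVec) (hC : Function.Injective C.mulVec) (hBC : Bᵀ * C = 0)
    (hcard : Fintype.card μ = Fintype.card ι - Fintype.card κ) :
    LinearMap.range C.mulVecLin = LinearMap.ker Bᵀ.mulVecLin := by
  refine Submodule.eq_of_le_of_finrank_eq ?_ ?_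
  · rintro _ ⟨w, rfl⟩
    simp only [LinearMap.mem_ker, mulVecLin_apply, mulVec_mulVec, hBC, zero_mulVec]
  · have hrank : (Bᵀ).rank = Fintype.card κ := by
      rw [rank_transpose]
      exact (LinearMap.finrank_range_of_inj hB).trans (Module.finrank_fintype_fun_eq_card K)
    have hnullity := LinearMap.finrank_range_add_finrank_ker Bᵀ.mulVecLin
    rw [Module.finrank_fintype_fun_eq_card] at hnullity
    change (Bᵀ).rank + _ = _ at hnullity
    rw [LinearMap.finrank_range_of_inj hC, Module.finrank_fintype_fun_eq_card, hcard]
    omega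

theorem dotProduct_transpose_mul_mul_mulVec [CommSemiring K] (P : Matrix ι μ K)
    (S : Matrix ι ι K) (w : μ → K) :
    w ⬝ᵥ ((Pᵀ * S * P) *ᵥ w) = (P *ᵥ w) ⬝ᵥ (S *ᵥ (P *ᵥ w)) := by
  rw [← mulVec_mulVec, ← mulVec_mulVec, dotProduct_mulVec, vecMul_transpose]

theorem forall_dotProduct_mulVec_neg_iff_of_transpose_mul_eq_zero
    [DecidableEq ι] [Field K] [LinearOrder K]
    {M : Matrix ι ι K} (hMsymm : M.IsSymm) (hM : IsUnit M.det)
    {B : Matrix ι κ K} {C : Matrix ι μ K}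
    (hB : Function.Injective B.mulVec) (hC : Function.Injective C.mulVec) (hBC : Bᵀ * C = 0)
    (hcard : Fintype.card μ = Fintype.card ι - Fintype.card κ) (S : Matrix ι ι K) :
    (∀ v : ι → K, v ≠ 0 → Bᵀ *ᵥ (M *ᵥ v) = 0 → v ⬝ᵥ (S *ᵥ v) < 0) ↔
      ∀ w : μ → K, w ≠ 0 → w ⬝ᵥ ((Cᵀ * (M⁻¹ * S * M⁻¹) * C) *ᵥ w) < 0 := by
  set P := M⁻¹ * C
  have hP : Cᵀ * (M⁻¹ * S * M⁻¹) * C = Pᵀ * S * P := by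
    simp only [P, transpose_mul, transpose_nonsing_inv, hMsymm.eq, Matrix.mul_assoc]
  have hPinj : Function.Injective P.mulVec := by
    rw [show P.mulVec = M⁻¹.mulVec ∘ C.mulVec from funext fun w => (mulVec_mulVec w _ _).symm]
    exact (mulVec_injective_iff_isUnit.2 ((isUnit_iff_isUnit_det _).2
      (isUnit_nonsing_inv_det _ hM))).comp hC
  have hker : ∀ v, Bᵀ *ᵥ (M *ᵥ v) = 0 ↔ ∃ w, P *ᵥ w = v := by
    intro v
    rw [← mulVecLin_apply, ← LinearMap.mem_ker,
      ← range_mulVecLin_eq_ker_transpose hB hC hBC hcard]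
    simp only [LinearMap.mem_range, mulVecLin_apply, P, ← mulVec_mulVec]
    constructor
    · rintro ⟨w, hw⟩
      exact ⟨w, by rw [hw, mulVec_mulVec, nonsing_inv_mul _ hM, one_mulVec]⟩
    · rintro ⟨w, rfl⟩
      exact ⟨w, by rw [mulVec_mulVec, mul_nonsing_inv _ hM, one_mulVec]⟩
  simp_rw [hP, dotProduct_transpose_mul_mul_mulVec]
  constructor
  · intro h w hw
    exact h _ (fun h0 => hw (hPinj (h0.trans (mulVec_zero P).symm))) ((hker _).2 ⟨w, rfl⟩)
  · intro h v hv hBv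
    obtain ⟨w, rfl⟩ := (hker v).1 hBv
    exact h w (by rintro rfl; exact hv (mulVec_zero P))

end Matrix

theorem stmt5_general {n m : ℕ}
    (f : (Fin n → ℝ) → (Fin n → ℝ))
    (M : (Fin n → ℝ) → Matrix (Fin n) (Fin n) ℝ) (hM : Differentiable ℝ M)
    (hMsymm : ∀ x, (M x).IsSymm) (hMpos : ∀ x, (M x).PosDef)
    (W : (Fin n → ℝ) → Matrix (Fin n) (Fin n) ℝ) (hW : W = fun x => (M x)⁻¹)
    (B : (Fin n → ℝ) → Matrix (Fin n) (Fin m) ℝ)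
    (hBrank : ∀ x, Function.Injective (B x).mulVec)
    (Bp : (Fin n → ℝ) → Matrix (Fin n) (Fin (n - m)) ℝ)
    (hBprank : ∀ x, Function.Injective (Bp x).mulVec)
    (hannih : ∀ x, (B x)ᵀ * Bp x = 0)
    (x : Fin n → ℝ) :
    -- (i) derivative of the inverse metric
    (∀ d : Fin n → ℝ, fderiv ℝ W x d = -(W x * fderiv ℝ M x d * W x)) ∧
    -- (ii) equivalence with the dual condition
    ((∀ v : Fin n → ℝ, v ≠ 0 → (B x)ᵀ *ᵥ (M x *ᵥ v) = 0 →
        v ⬝ᵥ ((fderiv ℝ M x (f x) + (jacM f x)ᵀ * M x + M x * jacM f x) *ᵥ v) < 0)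
      ↔ (∀ w : Fin (n - m) → ℝ, w ≠ 0 →
          w ⬝ᵥ (((Bp x)ᵀ * (-(fderiv ℝ W x (f x)) + jacM f x * W x + W x * (jacM f x)ᵀ)
                  * Bp x) *ᵥ w) < 0)) ∧
    -- (iii) equivalence of the two PDE forms, columnwise
    (∀ i : Fin m,
      (fderiv ℝ M x (fun k => B x k i)
          + (jacM (fun y k => B y k i) x)ᵀ * M x
          + M x * jacM (fun y k => B y k i) x = 0)
      ↔ (fderiv ℝ W x (fun k => B x k i)
          - jacM (fun y k => B y k i) x * W x
          - W x * (jacM (fun y k => B y k i) x)ᵀ = 0)) := by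
  subst hW
  have hdet : IsUnit (M x).det := (hMpos x).det_pos.ne'.isUnit
  have hinv : IsUnit (M x)⁻¹ := (isUnit_iff_isUnit_det _).2 (isUnit_nonsing_inv_det _ hdet)
  have hdW := fderiv_matrix_inv_apply (hM x) hdet
  refine ⟨hdW, ?_, fun i => ?_⟩
  · rw [hdW, neg_neg, ← inv_mul_add_transpose_mul_add_mul_mul_inv hdet]
    exact forall_dotProduct_mulVec_neg_iff_of_transpose_mul_eq_zero (hMsymm x) hdet (hBrank x)
      (hBprank x) (hannih x) (by simp only [Fintype.card_fin]) _
  · rw [hdW, ← neg_add', ← neg_add', neg_eq_zero,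
      ← inv_mul_add_transpose_mul_add_mul_mul_inv hdet, hinv.mul_left_eq_zero,
      hinv.mul_right_eq_zero]

theorem stmt5 {n m : ℕ} (hmn : m < n)
    (f : (Fin n → ℝ) → (Fin n → ℝ)) (hf : Differentiable ℝ f)
    (M : (Fin n → ℝ) → Matrix (Fin n) (Fin n) ℝ) (hM : Differentiable ℝ M)
    (hMsymm : ∀ x, (M x).IsSymm) (hMpos : ∀ x, (M x).PosDef)
    (W : (Fin n → ℝ) → Matrix (Fin n) (Fin n) ℝ) (hW : W = fun x => (M x)⁻¹)
    (B : (Fin n → ℝ) → Matrix (Fin n) (Fin m) ℝ) (hBdiff : Differentiable ℝ B)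
    (hBrank : ∀ x, Function.Injective (B x).mulVec)
    (Bp : (Fin n → ℝ) → Matrix (Fin n) (Fin (n - m)) ℝ)
    (hBprank : ∀ x, Function.Injective (Bp x).mulVec)
    (hannih : ∀ x, (B x)ᵀ * Bp x = 0)
    (x : Fin n → ℝ) :
    -- (i) derivative of the inverse metric
    (∀ d : Fin n → ℝ, fderiv ℝ W x d = -(W x * fderiv ℝ M x d * W x)) ∧
    -- (ii) equivalence with the dual condition
    ((∀ v : Fin n → ℝ, v ≠ 0 → (B x)ᵀ *ᵥ (M x *ᵥ v) = 0 →
        v ⬝ᵥ ((fderiv ℝ M x (f x) + (jacM f x)ᵀ * M x + M x * jacM f x) *ᵥ v) < 0)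
      ↔ (∀ w : Fin (n - m) → ℝ, w ≠ 0 →
          w ⬝ᵥ (((Bp x)ᵀ * (-(fderiv ℝ W x (f x)) + jacM f x * W x + W x * (jacM f x)ᵀ)
                  * Bp x) *ᵥ w) < 0)) ∧
    -- (iii) equivalence of the two PDE forms, columnwise
    (∀ i : Fin m,
      (fderiv ℝ M x (fun k => B x k i)
          + (jacM (fun y k => B y k i) x)ᵀ * M x
          + M x * jacM (fun y k => B y k i) x = 0)
      ↔ (fderiv ℝ W x (fun k => B x k i)
          - jacM (fun y k => B y k i) x * W x
          - W x * (jacM (fun y k => B y k i) x)ᵀ = 0)) :=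
  stmt5_general f M hM hMsymm hMpos W hW B hBrank Bp hBprank hannih x
end

section
/- Let f : ℝⁿ → ℝⁿ be continuously differentiable, B : ℝⁿ → ℝ^{n×m} continuous with B(x) of full column rank, and let M : ℝⁿ → ℝ^{n×n} be a continuously differentiable symmetric-matrix-valued map with p̲ I ⪯ M(x) ⪯ p̄ I for all x (p̄ ≥ p̲ > 0), satisfying condition (C1_λ) for some λ > 0. Set P(x) := M(x)B(x) and R(x) := (P(x)ᵀP(x))⁻¹. Then there exist a continuous function γ : ℝⁿ → [0,∞) and a constant λ₀ > 0 such that for every x ∈ ℝⁿ and every v ∈ ℝⁿ: vᵀ(∂_f M(x) + Df(x)ᵀ M(x) + M(x) Df(x)) v − 2γ(x) · vᵀ P(x) R(x) P(x)ᵀ v ≤ −λ₀ vᵀ M(x) v. -/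
/-!
Write `A` for the matrix of the differential Lyapunov form, `U := A + (λ/2) M` and split
`v = w + z` with `w := Π v`, where `Π = P (PᵀP)⁻¹ Pᵀ` is the orthogonal projection onto the range
of `P = M B`. Then `Bᵀ M z = Pᵀ z = 0`, so (C1_λ) and `M ⪰ p̲ I` give `zᵀ U z ≤ -(λ p̲ / 2) |z|²`.
The remaining three terms of `vᵀ U v` are bounded through the entrywise `ℓ¹` norm `D` of `U`, and
Young's inequality absorbs the cross terms into the negative `z`-term, leaving
`vᵀ U v ≤ (D + D² / c) |w|² = (D + D² / c) vᵀ Π v` with `c = λ p̲ / 2`. Hence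
`γ := (D + D² / c) / 2`, continuous because `f` and `M` are `C¹`, works with `λ₀ = λ / 2`.
-/

open Matrix

attribute [local instance] Matrix.normedAddCommGroup Matrix.normedSpace

theorem continuous_jacM {ι κ : Type*} [Fintype ι] [DecidableEq ι] [Fintype κ]
    {f : (ι → ℝ) → (κ → ℝ)} (hf : ContDiff ℝ 1 f) : Continuous (jacM f) :=
  continuous_matrix fun k _ =>
    (continuous_apply k).comp ((hf.continuous_fderiv one_ne_zero).clm_apply continuous_const)

theorem two_mul_mul_mul_le_sq_div_add (D a b : ℝ) {c : ℝ} (hc : 0 < c) :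
    2 * D * (a * b) ≤ D ^ 2 / c * a ^ 2 + c * b ^ 2 := by
  have hsq : D ^ 2 / c * a ^ 2 + c * b ^ 2 - 2 * D * (a * b) = (D * a - c * b) ^ 2 / c := by
    field_simp
    ring
  linarith [div_nonneg (sq_nonneg (D * a - c * b)) hc.le]

namespace Matrix

section DotProductBounds

variable {ι κ : Type*} [Fintype ι] [Fintype κ]

theorem sq_le_dotProduct_self (a : ι → ℝ) (i : ι) : a i ^ 2 ≤ a ⬝ᵥ a :=
  sq (a i) ▸ Finset.single_le_sum (fun j _ => mul_self_nonneg (a j)) (Finset.mem_univ i)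

def absEntrySum (U : Matrix ι κ ℝ) : ℝ := ∑ i, ∑ j, |U i j|

theorem absEntrySum_nonneg (U : Matrix ι κ ℝ) : 0 ≤ absEntrySum U :=
  Finset.sum_nonneg fun _ _ => Finset.sum_nonneg fun _ _ => abs_nonneg _

theorem abs_dotProduct_mulVec_le (U : Matrix ι κ ℝ) (a : ι → ℝ) (b : κ → ℝ) :
    |a ⬝ᵥ (U *ᵥ b)| ≤ absEntrySum U * (√(a ⬝ᵥ a) * √(b ⬝ᵥ b)) := by
  have hexpand : a ⬝ᵥ (U *ᵥ b) = ∑ i, ∑ j, U i j * (a i * b j) := by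
    simp only [dotProduct, mulVec, Finset.mul_sum]
    exact Finset.sum_congr rfl fun i _ => Finset.sum_congr rfl fun j _ => by ring
  rw [hexpand, absEntrySum, Finset.sum_mul]
  refine (Finset.abs_sum_le_sum_abs _ _).trans (Finset.sum_le_sum fun i _ => ?_)
  rw [Finset.sum_mul]
  refine (Finset.abs_sum_le_sum_abs _ _).trans (Finset.sum_le_sum fun j _ => ?_)
  rw [abs_mul, abs_mul]
  exact mul_le_mul_of_nonneg_left
    (mul_le_mul (Real.abs_le_sqrt (sq_le_dotProduct_self a i))
      (Real.abs_le_sqrt (sq_le_dotProduct_self b j)) (abs_nonneg _) (Real.sqrt_nonneg _))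
    (abs_nonneg _)

/-- By Young's inequality `2 D |w| |z| ≤ (D² / c) |w|² + c |z|²`, the negative `z`-term absorbs
the cross terms. -/
theorem dotProduct_mulVec_add_le (U : Matrix ι ι ℝ) {c : ℝ} (hc : 0 < c) (w z : ι → ℝ)
    (hz : z ⬝ᵥ (U *ᵥ z) ≤ -c * (z ⬝ᵥ z)) :
    (w + z) ⬝ᵥ (U *ᵥ (w + z)) ≤ (absEntrySum U + absEntrySum U ^ 2 / c) * (w ⬝ᵥ w) := by
  set D := absEntrySum U
  have bound (a b : ι → ℝ) : a ⬝ᵥ (U *ᵥ b) ≤ D * (√(a ⬝ᵥ a) * √(b ⬝ᵥ b)) :=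
    (le_abs_self _).trans (abs_dotProduct_mulVec_le U a b)
  have hw : √(w ⬝ᵥ w) ^ 2 = w ⬝ᵥ w := Real.sq_sqrt (dotProduct_self_star_nonneg w)
  have hz' : √(z ⬝ᵥ z) ^ 2 = z ⬝ᵥ z := Real.sq_sqrt (dotProduct_self_star_nonneg z)
  have hww : w ⬝ᵥ (U *ᵥ w) ≤ D * (w ⬝ᵥ w) := by
    simpa only [← sq, hw] using bound w w
  have hyoung := two_mul_mul_mul_le_sq_div_add D √(w ⬝ᵥ w) √(z ⬝ᵥ z) hc
  rw [hw, hz'] at hyoung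
  have hexpand : (w + z) ⬝ᵥ (U *ᵥ (w + z))
      = w ⬝ᵥ (U *ᵥ w) + w ⬝ᵥ (U *ᵥ z) + z ⬝ᵥ (U *ᵥ w) + z ⬝ᵥ (U *ᵥ z) := by
    simp only [mulVec_add, dotProduct_add, add_dotProduct]
    ring
  rw [hexpand]
  linarith [bound w z, bound z w, mul_comm √(w ⬝ᵥ w) √(z ⬝ᵥ z)]

end DotProductBounds

section ColSpaceProj

variable {ι κ : Type*} [Fintype ι] [Fintype κ] [DecidableEq κ]

noncomputable def colSpaceProj (Q : Matrix ι κ ℝ) : Matrix ι ι ℝ := Q * (Qᵀ * Q)⁻¹ * Qᵀ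

theorem isUnit_transpose_mul_self {Q : Matrix ι κ ℝ} (hQ : Function.Injective Q.mulVec) :
    IsUnit (Qᵀ * Q) := by
  simpa [conjTranspose_eq_transpose_of_trivial] using (PosDef.conjTranspose_mul_self Q hQ).isUnit

theorem transpose_mul_colSpaceProj {Q : Matrix ι κ ℝ} (hQ : Function.Injective Q.mulVec) :
    Qᵀ * colSpaceProj Q = Qᵀ := by
  rw [colSpaceProj, ← Matrix.mul_assoc, ← Matrix.mul_assoc,
    mul_nonsing_inv _ ((isUnit_iff_isUnit_det _).mp (isUnit_transpose_mul_self hQ)),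
    Matrix.one_mul]

theorem colSpaceProj_transpose (Q : Matrix ι κ ℝ) : (colSpaceProj Q)ᵀ = colSpaceProj Q := by
  rw [colSpaceProj, transpose_mul, transpose_mul, transpose_transpose, transpose_nonsing_inv,
    transpose_mul, transpose_transpose, Matrix.mul_assoc]

theorem colSpaceProj_mul_self {Q : Matrix ι κ ℝ} (hQ : Function.Injective Q.mulVec) :
    colSpaceProj Q * colSpaceProj Q = colSpaceProj Q := by
  change Q * (Qᵀ * Q)⁻¹ * Qᵀ * colSpaceProj Q = _
  rw [Matrix.mul_assoc, transpose_mul_colSpaceProj hQ]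
  rfl

theorem transpose_mulVec_sub_colSpaceProj_mulVec {Q : Matrix ι κ ℝ}
    (hQ : Function.Injective Q.mulVec) (v : ι → ℝ) :
    Qᵀ *ᵥ (v - colSpaceProj Q *ᵥ v) = 0 := by
  rw [mulVec_sub, mulVec_mulVec, transpose_mul_colSpaceProj hQ, sub_self]

theorem dotProduct_self_colSpaceProj_mulVec {Q : Matrix ι κ ℝ}
    (hQ : Function.Injective Q.mulVec) (v : ι → ℝ) :
    (colSpaceProj Q *ᵥ v) ⬝ᵥ (colSpaceProj Q *ᵥ v) = v ⬝ᵥ (colSpaceProj Q *ᵥ v) := by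
  rw [dotProduct_mulVec, vecMul_mulVec, ← mulVec_transpose, colSpaceProj_transpose,
    colSpaceProj_mul_self hQ, dotProduct_comm, colSpaceProj_transpose]

end ColSpaceProj

variable {ι κ : Type*} [Fintype ι] [Fintype κ] [DecidableEq κ]

theorem mulVec_injective_of_coercive {M : Matrix ι ι ℝ} {p : ℝ} (hp : 0 < p)
    (hcoer : ∀ v, p * (v ⬝ᵥ v) ≤ v ⬝ᵥ (M *ᵥ v)) : Function.Injective M.mulVec := by
  intro u u' huu
  have hker : M *ᵥ (u - u') = 0 := by rw [mulVec_sub, huu, sub_self]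
  have hle := hcoer (u - u')
  rw [hker, dotProduct_zero] at hle
  have hzero : (u - u') ⬝ᵥ (u - u') = 0 :=
    le_antisymm (nonpos_of_mul_nonpos_right hle hp) (dotProduct_self_star_nonneg _)
  exact sub_eq_zero.mp (dotProduct_self_eq_zero.mp hzero)

theorem dotProduct_mulVec_sub_colSpaceProj_le (A M : Matrix ι ι ℝ) (B : Matrix ι κ ℝ)
    (hB : Function.Injective B.mulVec) (hM : M.IsSymm) {p lam : ℝ} (hp : 0 < p) (hlam : 0 < lam)
    (hcoer : ∀ v, p * (v ⬝ᵥ v) ≤ v ⬝ᵥ (M *ᵥ v))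
    (hA : ∀ v, v ≠ 0 → Bᵀ *ᵥ (M *ᵥ v) = 0 → v ⬝ᵥ (A *ᵥ v) ≤ -lam * (v ⬝ᵥ (M *ᵥ v)))
    (v : ι → ℝ) :
    v ⬝ᵥ (A *ᵥ v) - (absEntrySum (A + (lam / 2) • M)
        + absEntrySum (A + (lam / 2) • M) ^ 2 / (lam * p / 2))
        * (v ⬝ᵥ (colSpaceProj (M * B) *ᵥ v))
      ≤ -(lam / 2) * (v ⬝ᵥ (M *ᵥ v)) := by
  set U := A + (lam / 2) • M
  have hP : Function.Injective (M * B).mulVec := by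
    rw [show (M * B).mulVec = M.mulVec ∘ B.mulVec from funext fun u => (mulVec_mulVec u M B).symm]
    exact (mulVec_injective_of_coercive hp hcoer).comp hB
  set w := colSpaceProj (M * B) *ᵥ v
  set z := v - w
  have hU (u : ι → ℝ) : u ⬝ᵥ (U *ᵥ u) = u ⬝ᵥ (A *ᵥ u) + lam / 2 * (u ⬝ᵥ (M *ᵥ u)) := by
    simp only [U, add_mulVec, smul_mulVec, dotProduct_add, dotProduct_smul, smul_eq_mul]
  have hz : z ⬝ᵥ (U *ᵥ z) ≤ -(lam * p / 2) * (z ⬝ᵥ z) := by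
    rw [hU]
    have hcz := hcoer z
    rcases eq_or_ne z 0 with hz0 | hz0
    · simp [hz0]
    · have hBz : Bᵀ *ᵥ (M *ᵥ z) = 0 := by
        rw [mulVec_mulVec, ← hM.eq, ← transpose_mul]
        exact transpose_mulVec_sub_colSpaceProj_mulVec hP v
      nlinarith [hA z hz0 hBz]
  have hsplit := dotProduct_mulVec_add_le U (by positivity) w z hz
  rw [add_sub_cancel, dotProduct_self_colSpaceProj_mulVec hP, hU] at hsplit
  linarith

end Matrix

theorem stmt9_general {n m : ℕ}
    (f : (Fin n → ℝ) → (Fin n → ℝ)) (hf : ContDiff ℝ 1 f)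
    (B : (Fin n → ℝ) → Matrix (Fin n) (Fin m) ℝ)
    (hBrank : ∀ x, Function.Injective (B x).mulVec)
    (M : (Fin n → ℝ) → Matrix (Fin n) (Fin n) ℝ) (hM : ContDiff ℝ 1 M)
    (hMsymm : ∀ x, (M x).IsSymm)
    (p₁ p₂ : ℝ) (hp₁ : 0 < p₁)
    (hbound : ∀ (x v : Fin n → ℝ), p₁ * (v ⬝ᵥ v) ≤ v ⬝ᵥ (M x *ᵥ v) ∧
        v ⬝ᵥ (M x *ᵥ v) ≤ p₂ * (v ⬝ᵥ v))
    (lam : ℝ) (hlam : 0 < lam)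
    -- condition (C1_λ)
    (hC1 : ∀ (x v : Fin n → ℝ), v ≠ 0 → (B x)ᵀ *ᵥ (M x *ᵥ v) = 0 →
      v ⬝ᵥ ((fderiv ℝ M x (f x) + (jacM f x)ᵀ * M x + M x * jacM f x) *ᵥ v)
        ≤ -lam * (v ⬝ᵥ (M x *ᵥ v)))
    (P : (Fin n → ℝ) → Matrix (Fin n) (Fin m) ℝ) (hP : P = fun x => M x * B x)
    (R : (Fin n → ℝ) → Matrix (Fin m) (Fin m) ℝ) (hR : R = fun x => ((P x)ᵀ * P x)⁻¹) :
    ∃ (γ : (Fin n → ℝ) → ℝ) (lam₀ : ℝ), Continuous γ ∧ (∀ x, 0 ≤ γ x) ∧ 0 < lam₀ ∧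
      ∀ (x v : Fin n → ℝ),
        v ⬝ᵥ ((fderiv ℝ M x (f x) + (jacM f x)ᵀ * M x + M x * jacM f x) *ᵥ v)
          - 2 * γ x * (v ⬝ᵥ ((P x * R x * (P x)ᵀ) *ᵥ v))
          ≤ -lam₀ * (v ⬝ᵥ (M x *ᵥ v)) := by
  subst hP hR
  set A := fun x => fderiv ℝ M x (f x) + (jacM f x)ᵀ * M x + M x * jacM f x
  set D := fun x => absEntrySum (A x + (lam / 2) • M x)
  have hA : Continuous A := by
    have := continuous_jacM hf
    have := (hM.continuous_fderiv one_ne_zero).clm_apply hf.continuous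
    have := hM.continuous
    fun_prop
  have hD : Continuous D := by
    simp only [D, absEntrySum]
    fun_prop
  refine ⟨fun x => (D x + D x ^ 2 / (lam * p₁ / 2)) / 2, lam / 2, by fun_prop,
    fun x => by have := absEntrySum_nonneg (A x + (lam / 2) • M x); positivity, by positivity,
    fun x v => ?_⟩
  have key := dotProduct_mulVec_sub_colSpaceProj_le (A x) (M x) (B x) (hBrank x) (hMsymm x) hp₁
    hlam (fun v => (hbound x v).1) (hC1 x) v
  rw [colSpaceProj] at key
  linarith

theorem stmt9 {n m : ℕ}
    (f : (Fin n → ℝ) → (Fin n → ℝ)) (hf : ContDiff ℝ 1 f)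
    (B : (Fin n → ℝ) → Matrix (Fin n) (Fin m) ℝ) (hB : Continuous B)
    (hBrank : ∀ x, Function.Injective (B x).mulVec)
    (M : (Fin n → ℝ) → Matrix (Fin n) (Fin n) ℝ) (hM : ContDiff ℝ 1 M)
    (hMsymm : ∀ x, (M x).IsSymm)
    (p₁ p₂ : ℝ) (hp₁ : 0 < p₁) (hp₁₂ : p₁ ≤ p₂)
    (hbound : ∀ (x v : Fin n → ℝ), p₁ * (v ⬝ᵥ v) ≤ v ⬝ᵥ (M x *ᵥ v) ∧
        v ⬝ᵥ (M x *ᵥ v) ≤ p₂ * (v ⬝ᵥ v))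
    (lam : ℝ) (hlam : 0 < lam)
    -- condition (C1_λ)
    (hC1 : ∀ (x v : Fin n → ℝ), v ≠ 0 → (B x)ᵀ *ᵥ (M x *ᵥ v) = 0 →
      v ⬝ᵥ ((fderiv ℝ M x (f x) + (jacM f x)ᵀ * M x + M x * jacM f x) *ᵥ v)
        ≤ -lam * (v ⬝ᵥ (M x *ᵥ v)))
    (P : (Fin n → ℝ) → Matrix (Fin n) (Fin m) ℝ) (hP : P = fun x => M x * B x)
    (R : (Fin n → ℝ) → Matrix (Fin m) (Fin m) ℝ) (hR : R = fun x => ((P x)ᵀ * P x)⁻¹) :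
    ∃ (γ : (Fin n → ℝ) → ℝ) (lam₀ : ℝ), Continuous γ ∧ (∀ x, 0 ≤ γ x) ∧ 0 < lam₀ ∧
      ∀ (x v : Fin n → ℝ),
        v ⬝ᵥ ((fderiv ℝ M x (f x) + (jacM f x)ᵀ * M x + M x * jacM f x) *ᵥ v)
          - 2 * γ x * (v ⬝ᵥ ((P x * R x * (P x)ᵀ) *ᵥ v))
          ≤ -lam₀ * (v ⬝ᵥ (M x *ᵥ v)) :=
  stmt9_general f hf B hBrank M hM hMsymm p₁ p₂ hp₁ hbound lam hlam hC1 P hP R hR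
end

section
/- Let f : ℝⁿ → ℝⁿ and B : ℝⁿ → ℝ^{n×m} be continuously differentiable, let M : ℝⁿ → ℝ^{n×n} be a continuously differentiable symmetric-matrix-valued map satisfying condition (PDE), let K : ℝⁿ → ℝ^{m×n} be continuous and λ₀ > 0 be such that for all x and v ∈ ℝⁿ: vᵀ(∂_f M(x) + Df(x)ᵀ M(x) + M(x) Df(x) + K(x)ᵀ B(x)ᵀ M(x) + M(x) B(x) K(x)) v ≤ −λ₀ vᵀ M(x) v. Let α : ℝⁿ → ℝᵐ be differentiable with Dα(x) = K(x) for all x, let c ∈ ℝᵐ be a constant vector, and define the closed-loop vector field F(x) := f(x) + B(x)(α(x) + c). Then for all x and v ∈ ℝⁿ: vᵀ(∂_F M(x) + DF(x)ᵀ M(x) + M(x) DF(x)) v ≤ −λ₀ vᵀ M(x) v. -/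
/-! The closed-loop field is `F = f + ∑ᵢ (αᵢ + cᵢ) Bᵢ`, so `DF = Df + ∑ᵢ (αᵢ + cᵢ) DBᵢ + B K`.
Since `∂_g M + Dgᵀ M + M Dg` is linear in the pair `(g(x), Dg(x))`, the left-hand side for `F` is
the one for `f` corrected by `Kᵀ Bᵀ M + M B K`, plus `∑ᵢ (αᵢ + cᵢ)` times the left-hand sides of
(PDE), which vanish; the contraction hypothesis on `K` then applies verbatim. -/

open Matrix

attribute [local instance] Matrix.normedAddCommGroup Matrix.normedSpace

section Jacobian

variable {ι κ μ : Type*} [Fintype ι] [Fintype κ] [Fintype μ]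

theorem hasFDerivAt_mulVec {A : (ι → ℝ) → Matrix κ μ ℝ} {a : (ι → ℝ) → μ → ℝ} {x : ι → ℝ}
    (hA : DifferentiableAt ℝ A x) (ha : DifferentiableAt ℝ a x) :
    HasFDerivAt (fun y => A y *ᵥ a y)
      (∑ i, (a x i • fderiv ℝ (fun y k => A y k i) x
        + ((ContinuousLinearMap.proj i).comp (fderiv ℝ a x)).smulRight fun k => A x k i)) x := by
  have hcol : ∀ i, DifferentiableAt ℝ (fun y k => A y k i) x := fun i =>
    differentiableAt_pi.2 fun k => differentiableAt_pi.1 (differentiableAt_pi.1 hA k) i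
  have hfun : (fun y => A y *ᵥ a y) = fun y => ∑ i, a y i • fun k => A y k i := by
    funext y k
    simp [mulVec, dotProduct, Finset.sum_apply, mul_comm]
  rw [hfun]
  exact HasFDerivAt.fun_sum fun i _ =>
    (hasFDerivAt_pi'.1 ha.hasFDerivAt i).smul (hcol i).hasFDerivAt

variable [DecidableEq ι]

theorem HasFDerivAt.jacM_eq {g : (ι → ℝ) → κ → ℝ} {g' : (ι → ℝ) →L[ℝ] κ → ℝ} {x : ι → ℝ}
    (h : HasFDerivAt g g' x) : jacM g x = LinearMap.toMatrix' (g' : (ι → ℝ) →ₗ[ℝ] κ → ℝ) := by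
  ext k j
  simp [jacM, h.fderiv, LinearMap.toMatrix'_apply]

theorem jacM_add {g h : (ι → ℝ) → κ → ℝ} {x : ι → ℝ}
    (hg : DifferentiableAt ℝ g x) (hh : DifferentiableAt ℝ h x) :
    jacM (fun y => g y + h y) x = jacM g x + jacM h x := by
  rw [(hg.hasFDerivAt.fun_add hh.hasFDerivAt).jacM_eq, hg.hasFDerivAt.jacM_eq,
    hh.hasFDerivAt.jacM_eq, ContinuousLinearMap.toLinearMap_add, map_add]

theorem jacM_add_const (g : (ι → ℝ) → κ → ℝ) (c : κ → ℝ) (x : ι → ℝ) :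
    jacM (fun y => g y + c) x = jacM g x := by
  simp [jacM, fderiv_add_const]

theorem jacM_mulVec {A : (ι → ℝ) → Matrix κ μ ℝ} {a : (ι → ℝ) → μ → ℝ} {x : ι → ℝ}
    (hA : DifferentiableAt ℝ A x) (ha : DifferentiableAt ℝ a x) :
    jacM (fun y => A y *ᵥ a y) x
      = ∑ i, a x i • jacM (fun y k => A y k i) x + A x * jacM a x := by
  rw [(hasFDerivAt_mulVec hA ha).jacM_eq]
  ext k j
  simp [jacM, LinearMap.toMatrix'_apply, Matrix.mul_apply, Matrix.sum_apply, mul_comm,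
    Finset.sum_add_distrib]

end Jacobian

theorem closedLoop_contraction_matrix_eq {R κ μ : Type*} [CommRing R] [Fintype κ] [Fintype μ]
    (D : (κ → R) →ₗ[R] Matrix κ κ R) (P : Matrix κ κ R) (w : κ → R) (J : Matrix κ κ R)
    (A : Matrix κ μ R) (JA : μ → Matrix κ κ R) (K : Matrix μ κ R) (a : μ → R) :
    D (w + A *ᵥ a) + (J + ∑ i, a i • JA i + A * K)ᵀ * P + P * (J + ∑ i, a i • JA i + A * K)
      = (D w + Jᵀ * P + P * J + Kᵀ * Aᵀ * P + P * A * K)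
        + ∑ i, a i • (D (fun k => A k i) + (JA i)ᵀ * P + P * JA i) := by
  have hAa : A *ᵥ a = ∑ i, a i • fun k => A k i := by
    ext k
    simp [mulVec, dotProduct, Finset.sum_apply, mul_comm]
  rw [hAa, map_add, map_sum]
  simp only [map_smul, transpose_add, transpose_sum, transpose_smul, transpose_mul, Matrix.add_mul,
    Matrix.mul_add, Finset.sum_mul, Matrix.mul_sum, Matrix.smul_mul, Matrix.mul_smul, smul_add,
    Finset.sum_add_distrib, Matrix.mul_assoc]
  abel

theorem stmt10_general {n m : ℕ}
    (f : (Fin n → ℝ) → (Fin n → ℝ)) (hf : ContDiff ℝ 1 f)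
    (B : (Fin n → ℝ) → Matrix (Fin n) (Fin m) ℝ) (hB : ContDiff ℝ 1 B)
    (M : (Fin n → ℝ) → Matrix (Fin n) (Fin n) ℝ)
    -- condition (PDE)
    (hPDE : ∀ (i : Fin m) (x : Fin n → ℝ),
      fderiv ℝ M x (fun k => B x k i)
        + (jacM (fun y k => B y k i) x)ᵀ * M x
        + M x * jacM (fun y k => B y k i) x = 0)
    (K : (Fin n → ℝ) → Matrix (Fin m) (Fin n) ℝ)
    (lam₀ : ℝ)
    (hKcontr : ∀ (x v : Fin n → ℝ),
      v ⬝ᵥ ((fderiv ℝ M x (f x) + (jacM f x)ᵀ * M x + M x * jacM f x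
            + (K x)ᵀ * (B x)ᵀ * M x + M x * B x * K x) *ᵥ v)
        ≤ -lam₀ * (v ⬝ᵥ (M x *ᵥ v)))
    (α : (Fin n → ℝ) → (Fin m → ℝ)) (hα : Differentiable ℝ α)
    (hαK : ∀ x, jacM α x = K x)
    (c : Fin m → ℝ)
    (F : (Fin n → ℝ) → (Fin n → ℝ)) (hF : F = fun x => f x + B x *ᵥ (α x + c)) :
    ∀ (x v : Fin n → ℝ),
      v ⬝ᵥ ((fderiv ℝ M x (F x) + (jacM F x)ᵀ * M x + M x * jacM F x) *ᵥ v)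
        ≤ -lam₀ * (v ⬝ᵥ (M x *ᵥ v)) := by
  subst hF
  intro x v
  have hfx : DifferentiableAt ℝ f x := hf.differentiable one_ne_zero x
  have hBx : DifferentiableAt ℝ B x := hB.differentiable one_ne_zero x
  have hαc : DifferentiableAt ℝ (fun y => α y + c) x := (hα x).add_const c
  have hjac : jacM (fun y => f y + B y *ᵥ (α y + c)) x
      = jacM f x + ∑ i, (α x i + c i) • jacM (fun y k => B y k i) x + B x * K x := by
    rw [jacM_add hfx (hasFDerivAt_mulVec hBx hαc).differentiableAt, jacM_mulVec hBx hαc,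
      jacM_add_const, hαK]
    simp only [Pi.add_apply, add_assoc]
  have hexpand := closedLoop_contraction_matrix_eq (fderiv ℝ M x : _ →ₗ[ℝ] _) (M x) (f x)
    (jacM f x) (B x) (fun i => jacM (fun y k => B y k i) x) (K x) (α x + c)
  simp only [ContinuousLinearMap.coe_coe, Pi.add_apply, hPDE, smul_zero, Finset.sum_const_zero,
    add_zero] at hexpand
  rw [hjac, hexpand]
  exact hKcontr x v

theorem stmt10 {n m : ℕ}
    (f : (Fin n → ℝ) → (Fin n → ℝ)) (hf : ContDiff ℝ 1 f)
    (B : (Fin n → ℝ) → Matrix (Fin n) (Fin m) ℝ) (hB : ContDiff ℝ 1 B)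
    (M : (Fin n → ℝ) → Matrix (Fin n) (Fin n) ℝ) (hM : ContDiff ℝ 1 M)
    (hMsymm : ∀ x, (M x).IsSymm)
    -- condition (PDE)
    (hPDE : ∀ (i : Fin m) (x : Fin n → ℝ),
      fderiv ℝ M x (fun k => B x k i)
        + (jacM (fun y k => B y k i) x)ᵀ * M x
        + M x * jacM (fun y k => B y k i) x = 0)
    (K : (Fin n → ℝ) → Matrix (Fin m) (Fin n) ℝ) (hK : Continuous K)
    (lam₀ : ℝ) (hlam₀ : 0 < lam₀)
    (hKcontr : ∀ (x v : Fin n → ℝ),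
      v ⬝ᵥ ((fderiv ℝ M x (f x) + (jacM f x)ᵀ * M x + M x * jacM f x
            + (K x)ᵀ * (B x)ᵀ * M x + M x * B x * K x) *ᵥ v)
        ≤ -lam₀ * (v ⬝ᵥ (M x *ᵥ v)))
    (α : (Fin n → ℝ) → (Fin m → ℝ)) (hα : Differentiable ℝ α)
    (hαK : ∀ x, jacM α x = K x)
    (c : Fin m → ℝ)
    (F : (Fin n → ℝ) → (Fin n → ℝ)) (hF : F = fun x => f x + B x *ᵥ (α x + c)) :
    ∀ (x v : Fin n → ℝ),
      v ⬝ᵥ ((fderiv ℝ M x (F x) + (jacM F x)ᵀ * M x + M x * jacM F x) *ᵥ v)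
        ≤ -lam₀ * (v ⬝ᵥ (M x *ᵥ v)) :=
  stmt10_general f hf B hB M hPDE K lam₀ hKcontr α hα hαK c F hF
end
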